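/- Let u be a subharmonic function on ℝ², and let M_u(r) denote the maximum of u over the closed Euclidean disk of radius r centered at the origin. Then for any 0 < r₁ < r₂ < r₃, one has M_u(r₂) ≤ [M_u(r₁)(log r₃ − log r₂) + M_u(r₃)(log r₂ − log r₁)] / (log r₃ − log r₁). -/

import Mathlib

/-!
Let `b ≥ 0` and `a` be such that `a + b log r` equals `M_u(r)` at `r = r₁` and at `r = r₃`.
In the plane `log ‖x‖` is harmonic away from the origin (it is `log |z|` on `ℂ` up to a linear
isometry), so `u - b log ‖x‖` is subharmonic on the annulus `r₁ ≤ ‖x‖ ≤ r₃` and, by the weak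
maximum principle, bounded there by its values on the two boundary circles, i.e. by `a`. Hence
`u ≤ a + b log r₂` on the annulus, and also on the inner disk because `b ≥ 0`.

The weak maximum principle follows by perturbing with `ε ‖x‖²`, whose Laplacian is positive:
a `C²` function with positive Laplacian has no interior local maximum, because at a local
maximum its second derivative along every line is nonpositive.
-/

/-- The Euclidean Laplacian `Δu(x) = ∑ᵢ ∂²u/∂xᵢ²(x)` on `ℝ²`. -/
noncomputable def euclideanLaplacian (u : EuclideanSpace ℝ (Fin 2) → ℝ)
    (x : EuclideanSpace ℝ (Fin 2)) : ℝ :=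
  ∑ i : Fin 2,
    iteratedFDeriv ℝ 2 u x ![EuclideanSpace.single i (1 : ℝ), EuclideanSpace.single i (1 : ℝ)]

/-- `M_u(r)`, the maximum of `u` over the closed Euclidean disk of radius `r`
centered at the origin. -/
noncomputable def maxDisk (u : EuclideanSpace ℝ (Fin 2) → ℝ) (r : ℝ) : ℝ :=
  sSup (u '' Metric.closedBall (0 : EuclideanSpace ℝ (Fin 2)) r)

open Set Filter Topology InnerProductSpace Laplacian Module

theorem IsLocalMax.deriv_deriv_nonpos {f : ℝ → ℝ} {a : ℝ} (hf : IsLocalMax f a)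
    (hc : ContinuousAt f a) : deriv (deriv f) a ≤ 0 := by
  by_contra! hpos
  have hmin : IsLocalMin f a := isLocalMin_of_deriv_deriv_pos hpos hf.deriv_eq_zero hc
  have hconst : f =ᶠ[𝓝 a] fun _ => f a := by
    filter_upwards [hf, hmin] with x hle hge using le_antisymm hle hge
  exact hpos.ne' (by rw [hconst.deriv.deriv_eq]; simp)

theorem IsLocalMax.iteratedFDeriv_two_nonpos {E : Type*} [NormedAddCommGroup E] [NormedSpace ℝ E]
    {f : E → ℝ} {x : E} (hf : IsLocalMax f x) (hf2 : ContDiffAt ℝ 2 f x) (v : E) :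
    iteratedFDeriv ℝ 2 f x ![v, v] ≤ 0 := by
  set line : ℝ → E := fun t => x + t • v
  have hline : ∀ t, HasDerivAt line v t := fun t =>
    (((hasDerivAt_id t).smul_const v).const_add x).congr_deriv (one_smul ℝ v)
  have hline0 : line 0 = x := by simp [line]
  rw [iteratedFDeriv_two_apply, ← hline0]
  rw [← hline0] at hf hf2
  have hderiv : deriv (f ∘ line) =ᶠ[𝓝 0] fun t => fderiv ℝ f (line t) v := by
    filter_upwards [(hline 0).continuousAt.eventually (hf2.eventually (by simp))] with t ht
    exact ((ht.differentiableAt (by simp)).hasFDerivAt.comp_hasDerivAt t (hline t)).deriv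
  have hD : DifferentiableAt ℝ (fderiv ℝ f) (line 0) :=
    (hf2.fderiv_right (m := 1) (by norm_num)).differentiableAt (by simp)
  have hsecond : HasDerivAt (fun t => fderiv ℝ f (line t) v)
      (fderiv ℝ (fderiv ℝ f) (line 0) v v) 0 := by
    simpa using (hD.hasFDerivAt.comp_hasDerivAt 0 (hline 0)).clm_apply (hasDerivAt_const 0 v)
  have hmax : IsLocalMax (f ∘ line) 0 := hf.comp_continuous (hline 0).continuousAt
  simpa [hderiv.deriv_eq, hsecond.deriv] using
    hmax.deriv_deriv_nonpos (hf2.continuousAt.comp (hline 0).continuousAt)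

section

variable {E : Type*} [NormedAddCommGroup E] [InnerProductSpace ℝ E] [FiniteDimensional ℝ E]

theorem IsLocalMax.laplacian_nonpos {f : E → ℝ} {x : E} (hf : IsLocalMax f x)
    (hf2 : ContDiffAt ℝ 2 f x) : Δ f x ≤ 0 := by
  rw [laplacian_eq_iteratedFDeriv_stdOrthonormalBasis]
  exact Finset.sum_nonpos fun i _ => hf.iteratedFDeriv_two_nonpos hf2 _

theorem laplacian_norm_sq (x : E) : Δ (fun y : E => ‖y‖ ^ 2) x = 2 * finrank ℝ E := by
  have hfd : fderiv ℝ (fun y : E => ‖y‖ ^ 2) = ⇑(2 • innerSL ℝ : E →L[ℝ] E →L[ℝ] ℝ) := by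
    funext y
    exact (hasStrictFDerivAt_norm_sq y).hasFDerivAt.fderiv
  have hinner (v : E) : innerSL ℝ v v = ‖v‖ ^ 2 := by
    rw [innerSL_apply_apply, real_inner_self_eq_norm_sq]
  simp only [laplacian_eq_iteratedFDeriv_stdOrthonormalBasis, iteratedFDeriv_two_apply, hfd,
    ContinuousLinearMap.fderiv]
  simp [hinner, mul_comm]

theorem laplacian_comp_linearIsometryEquiv {F : Type*} [NormedAddCommGroup F]
    [InnerProductSpace ℝ F] [FiniteDimensional ℝ F] (g : F ≃ₗᵢ[ℝ] E) (f : E → ℝ) (x : F) :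
    Δ (f ∘ g) x = Δ f (g x) := by
  have hcomp : iteratedFDeriv ℝ 2 (f ∘ g) x =
      (iteratedFDeriv ℝ 2 f (g x)).compContinuousLinearMap fun _ => (g : F →L[ℝ] E) := by
    simpa [← iteratedFDerivWithin_univ] using
      g.toContinuousLinearEquiv.iteratedFDerivWithin_comp_right f uniqueDiffOn_univ (mem_univ _) 2
  let b := stdOrthonormalBasis ℝ F
  rw [laplacian_eq_iteratedFDeriv_orthonormalBasis _ b,
    laplacian_eq_iteratedFDeriv_orthonormalBasis _ (b.map g)]
  dsimp only
  rw [hcomp]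
  refine Finset.sum_congr rfl fun i _ => ?_
  rw [ContinuousMultilinearMap.compContinuousLinearMap_apply]
  congr 1
  ext j
  fin_cases j <;> rfl

theorem laplacian_log_norm_eq_zero (hE : finrank ℝ E = 2) {x : E} (hx : x ≠ 0) :
    Δ (fun y : E => Real.log ‖y‖) x = 0 := by
  let g : E ≃ₗᵢ[ℝ] ℂ := ((stdOrthonormalBasis ℝ E).reindex (finCongr hE)).repr.trans
    Complex.orthonormalBasisOneI.repr.symm
  have hlog : (fun y : E => Real.log ‖y‖) = (fun z : ℂ => Real.log ‖z‖) ∘ g := by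
    funext y
    simp
  rw [hlog, laplacian_comp_linearIsometryEquiv]
  exact (analyticAt_id.harmonicAt_log_norm (by simpa using hx)).2.self_of_nhds

theorem IsCompact.exists_mem_frontier_isMaxOn_of_laplacian_pos {K : Set E} (hK : IsCompact K)
    (hne : K.Nonempty) {f : E → ℝ} (hf : ContinuousOn f K)
    (hf2 : ∀ x ∈ interior K, ContDiffAt ℝ 2 f x) (hΔ : ∀ x ∈ interior K, 0 < Δ f x) :
    ∃ p ∈ frontier K, IsMaxOn f K p := by
  obtain ⟨p, hpK, hmax⟩ := hK.exists_isMaxOn hne hf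
  refine ⟨p, ?_, hmax⟩
  rw [hK.isClosed.frontier_eq]
  refine ⟨hpK, fun hp => (hΔ p hp).not_ge ?_⟩
  exact IsLocalMax.laplacian_nonpos (hmax.isLocalMax (mem_interior_iff_mem_nhds.mp hp)) (hf2 p hp)

theorem IsCompact.le_of_forall_mem_frontier_le_of_laplacian_nonneg [Nontrivial E] {K : Set E}
    (hK : IsCompact K) {f : E → ℝ} (hf : ContinuousOn f K)
    (hf2 : ∀ x ∈ interior K, ContDiffAt ℝ 2 f x) (hΔ : ∀ x ∈ interior K, 0 ≤ Δ f x) {M : ℝ}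
    (hM : ∀ x ∈ frontier K, f x ≤ M) {x : E} (hx : x ∈ K) : f x ≤ M := by
  obtain ⟨R, hR⟩ := hK.isBounded.subset_closedBall 0
  refine le_of_forall_pos_le_add fun ε hε => ?_
  set δ := ε / (R ^ 2 + 1)
  have hδ : 0 < δ := by positivity
  have hsq : ContDiff ℝ 2 fun y : E => ‖y‖ ^ 2 := contDiff_norm_sq ℝ
  set g : E → ℝ := f + δ • fun y => ‖y‖ ^ 2
  have hg2 : ∀ y ∈ interior K, ContDiffAt ℝ 2 g y := fun y hy =>
    (hf2 y hy).add (hsq.contDiffAt.const_smul δ)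
  have hgΔ : ∀ y ∈ interior K, 0 < Δ g y := fun y hy => by
    rw [(hf2 y hy).laplacian_add (f₂ := δ • fun y => ‖y‖ ^ 2) (hsq.contDiffAt.const_smul δ),
      laplacian_smul _ hsq.contDiffAt, laplacian_norm_sq, smul_eq_mul]
    have : (0 : ℝ) < finrank ℝ E := by exact_mod_cast finrank_pos
    have := hΔ y hy
    positivity
  obtain ⟨p, hp, hmax⟩ := hK.exists_mem_frontier_isMaxOn_of_laplacian_pos ⟨x, hx⟩
    (hf.add (hsq.continuous.continuousOn.const_smul δ)) hg2 hgΔ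
  have hpR : ‖p‖ ≤ R := mem_closedBall_zero_iff.mp (hR (hK.isClosed.frontier_subset hp))
  calc f x ≤ g x := le_add_of_nonneg_right (smul_nonneg hδ.le (sq_nonneg ‖x‖))
    _ ≤ g p := hmax hx
    _ ≤ M + δ * R ^ 2 := add_le_add (hM p hp) (show δ * ‖p‖ ^ 2 ≤ δ * R ^ 2 by gcongr)
    _ ≤ M + ε := by
      gcongr
      rw [div_mul_eq_mul_div, div_le_iff₀ (by positivity)]
      nlinarith

theorem le_add_mul_log_norm_of_le_on_spheres (hE : finrank ℝ E = 2) {u : E → ℝ}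
    (hu : ContDiff ℝ 2 u) (hsub : ∀ x, 0 ≤ Δ u x) {r₁ r₃ a b : ℝ} (h₀ : 0 < r₁) (h₁₃ : r₁ ≤ r₃)
    (hr₁ : ∀ y : E, ‖y‖ = r₁ → u y ≤ a + b * Real.log r₁)
    (hr₃ : ∀ y : E, ‖y‖ = r₃ → u y ≤ a + b * Real.log r₃)
    {x : E} (hx₁ : r₁ ≤ ‖x‖) (hx₃ : ‖x‖ ≤ r₃) : u x ≤ a + b * Real.log ‖x‖ := by
  have : Nontrivial E := Module.nontrivial_of_finrank_eq_succ hE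
  let K : Set E := norm ⁻¹' Icc r₁ r₃
  have hK : IsCompact K := (isCompact_closedBall 0 r₃).of_isClosed_subset
    (isClosed_Icc.preimage continuous_norm) fun y hy => mem_closedBall_zero_iff.mpr hy.2
  have hne : ∀ y ∈ K, y ≠ 0 := fun y hy => norm_pos_iff.mp (h₀.trans_le hy.1)
  have hlog : ∀ y ∈ K, ContDiffAt ℝ 2 (fun y : E => Real.log ‖y‖) y := fun y hy =>
    (contDiffAt_norm ℝ (hne y hy)).log (norm_ne_zero_iff.mpr (hne y hy))
  have hf2 : ∀ y ∈ K, ContDiffAt ℝ 2 (u - b • fun y : E => Real.log ‖y‖) y := fun y hy =>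
    hu.contDiffAt.sub ((hlog y hy).const_smul b)
  have hΔ : ∀ y ∈ interior K, 0 ≤ Δ (u - b • fun y : E => Real.log ‖y‖) y := fun y hy => by
    have hyK := interior_subset hy
    rw [hu.contDiffAt.laplacian_sub (f₂ := b • fun y : E => Real.log ‖y‖)
      ((hlog y hyK).const_smul b), laplacian_smul _ (hlog y hyK),
      laplacian_log_norm_eq_zero hE (hne y hyK), smul_zero, sub_zero]
    exact hsub y
  have hfrontier : ∀ y ∈ frontier K, (u - b • fun y : E => Real.log ‖y‖) y ≤ a := fun y hy => by
    obtain h | h : ‖y‖ = r₁ ∨ ‖y‖ = r₃ := by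
      simpa [frontier_Icc h₁₃] using continuous_norm.frontier_preimage_subset (Icc r₁ r₃) hy
    · simp only [Pi.sub_apply, Pi.smul_apply, smul_eq_mul, h]
      linarith [hr₁ y h]
    · simp only [Pi.sub_apply, Pi.smul_apply, smul_eq_mul, h]
      linarith [hr₃ y h]
  have hx : x ∈ K := ⟨hx₁, hx₃⟩
  have hmax := hK.le_of_forall_mem_frontier_le_of_laplacian_nonneg
    (fun y hy => (hf2 y hy).continuousAt.continuousWithinAt)
    (fun y hy => hf2 y (interior_subset hy)) hΔ hfrontier hx
  simp only [Pi.sub_apply, Pi.smul_apply, smul_eq_mul] at hmax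
  linarith

end

theorem euclideanLaplacian_eq_laplacian (u : EuclideanSpace ℝ (Fin 2) → ℝ) :
    euclideanLaplacian u = Δ u := by
  ext x
  simp [euclideanLaplacian,
    laplacian_eq_iteratedFDeriv_orthonormalBasis u (EuclideanSpace.basisFun (Fin 2) ℝ)]

section maxDisk

variable {u : EuclideanSpace ℝ (Fin 2) → ℝ}

theorem le_maxDisk (hu : Continuous u) {r : ℝ} {y : EuclideanSpace ℝ (Fin 2)} (hy : ‖y‖ ≤ r) :
    u y ≤ maxDisk u r :=
  le_csSup ((isCompact_closedBall 0 r).image hu).bddAbove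
    (mem_image_of_mem u (mem_closedBall_zero_iff.mpr hy))

theorem maxDisk_le {r c : ℝ} (hr : 0 ≤ r) (h : ∀ y : EuclideanSpace ℝ (Fin 2), ‖y‖ ≤ r → u y ≤ c) :
    maxDisk u r ≤ c := by
  refine csSup_le ⟨u 0, mem_image_of_mem u (Metric.mem_closedBall_self hr)⟩ ?_
  rintro _ ⟨y, hy, rfl⟩
  exact h y (mem_closedBall_zero_iff.mp hy)

end maxDisk

theorem exists_affine_interpolation {ℓ₁ ℓ₃ M₁ M₃ : ℝ} (hℓ : ℓ₁ < ℓ₃) (hM : M₁ ≤ M₃) :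
    ∃ a b : ℝ, 0 ≤ b ∧ a + b * ℓ₁ = M₁ ∧ a + b * ℓ₃ = M₃ ∧
      ∀ ℓ, (M₁ * (ℓ₃ - ℓ) + M₃ * (ℓ - ℓ₁)) / (ℓ₃ - ℓ₁) = a + b * ℓ := by
  have hL : ℓ₃ - ℓ₁ ≠ 0 := (sub_pos.mpr hℓ).ne'
  refine ⟨M₁ - (M₃ - M₁) / (ℓ₃ - ℓ₁) * ℓ₁, (M₃ - M₁) / (ℓ₃ - ℓ₁),
    div_nonneg (by linarith) (by linarith), by ring, ?_, fun ℓ => ?_⟩ <;>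
  · field_simp
    ring

/-- **Classical three circles theorem in `ℝ²`.** If `u` is subharmonic on `ℝ²`
(`u` is `C²` and `Δu ≥ 0`), then for any `0 < r₁ < r₂ < r₃`,
`M_u(r₂) ≤ [M_u(r₁)(log r₃ − log r₂) + M_u(r₃)(log r₂ − log r₁)]/(log r₃ − log r₁)`. -/
theorem three_circles_euclidean_dim_two
    (u : EuclideanSpace ℝ (Fin 2) → ℝ)
    (hu : ContDiff ℝ 2 u)
    (hsub : ∀ x, 0 ≤ euclideanLaplacian u x)
    {r₁ r₂ r₃ : ℝ} (h₀ : 0 < r₁) (h₁ : r₁ < r₂) (h₂ : r₂ < r₃) :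
    maxDisk u r₂ ≤
      (maxDisk u r₁ * (Real.log r₃ - Real.log r₂) +
        maxDisk u r₃ * (Real.log r₂ - Real.log r₁)) /
        (Real.log r₃ - Real.log r₁) := by
  rw [euclideanLaplacian_eq_laplacian] at hsub
  have hM : maxDisk u r₁ ≤ maxDisk u r₃ :=
    maxDisk_le h₀.le fun y hy => le_maxDisk hu.continuous (hy.trans (h₁.trans h₂).le)
  obtain ⟨a, b, hb, hab₁, hab₃, hinterp⟩ :=
    exists_affine_interpolation (Real.log_lt_log h₀ (h₁.trans h₂)) hM
  rw [hinterp]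
  refine maxDisk_le (h₀.trans h₁).le fun y hy => ?_
  rcases le_or_gt ‖y‖ r₁ with hy₁ | hy₁
  · calc u y ≤ a + b * Real.log r₁ := hab₁ ▸ le_maxDisk hu.continuous hy₁
      _ ≤ a + b * Real.log r₂ := by gcongr
  · calc u y ≤ a + b * Real.log ‖y‖ :=
          le_add_mul_log_norm_of_le_on_spheres finrank_euclideanSpace_fin hu hsub h₀
            (h₁.trans h₂).le (fun z hz => hab₁ ▸ le_maxDisk hu.continuous hz.le)
            (fun z hz => hab₃ ▸ le_maxDisk hu.continuous hz.le) hy₁.le (hy.trans h₂.le)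
      _ ≤ a + b * Real.log r₂ := by gcongr; exact h₀.trans hy₁
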